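/- The multiple zeta value identity 4 ζ(2,2) = 3 ζ(4) holds, where ζ(2,2) = Σ_{0<m<n} 1/(m² n²) and ζ(4) = Σ_{n>0} 1/n⁴. -/

import Mathlib

/-!
Squaring `ζ(2) = ∑ 1/n²` and splitting the double sum over pairs `(m, n)` into `m < n`, `m > n`
and `m = n` gives `ζ(2)² = 2ζ(2,2) + ζ(4)`. With `ζ(2) = π²/6` and `ζ(4) = π⁴/90` this yields
`ζ(2,2) = π⁴/120`, i.e. `4ζ(2,2) = π⁴/30 = 3ζ(4)`.
-/

open Real

section SquareOfSeries

variable {ι R : Type*} [LinearOrder ι]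

theorem tsum_ite_gt_mul_eq_tsum_ite_lt_mul [CommSemiring R] [TopologicalSpace R] (f : ι → R) :
    ∑' p : ι × ι, (if p.2 < p.1 then f p.1 * f p.2 else 0) =
      ∑' p : ι × ι, if p.1 < p.2 then f p.1 * f p.2 else 0 := by
  rw [← (Equiv.prodComm ι ι).tsum_eq]
  simp [mul_comm]

theorem tsum_ite_eq_mul_eq_tsum_sq [CommSemiring R] [TopologicalSpace R] (f : ι → R) :
    ∑' p : ι × ι, (if p.1 = p.2 then f p.1 * f p.2 else 0) = ∑' i, f i ^ 2 := by
  have hdiag : Function.Injective fun i : ι => (i, i) := fun _ _ h => (Prod.ext_iff.1 h).1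
  rw [← hdiag.tsum_eq]
  · simp [sq]
  · intro p hp
    by_cases h : p.1 = p.2
    · exact ⟨p.1, Prod.ext rfl h⟩
    · simp [h] at hp

theorem tsum_sq_eq_two_mul_tsum_ite_lt_mul_add_tsum_sq [NormedCommRing R] [CompleteSpace R]
    {f : ι → R} (hf : Summable fun i => ‖f i‖) :
    (∑' i, f i) ^ 2 =
      2 * ∑' p : ι × ι, (if p.1 < p.2 then f p.1 * f p.2 else 0) + ∑' i, f i ^ 2 := by
  have hprod : Summable fun p : ι × ι => f p.1 * f p.2 := summable_mul_of_summable_norm hf hf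
  have hpiece (P : ι × ι → Prop) [DecidablePred P] :
      Summable fun p : ι × ι => if P p then f p.1 * f p.2 else 0 :=
    hprod.summable_of_eq_zero_or_self fun p => by split_ifs <;> simp
  calc (∑' i, f i) ^ 2 = ∑' p : ι × ι, f p.1 * f p.2 := by
        rw [sq, tsum_mul_tsum_of_summable_norm hf hf]
    _ = ∑' p : ι × ι, ((if p.1 < p.2 then f p.1 * f p.2 else 0) +
          (if p.2 < p.1 then f p.1 * f p.2 else 0) + (if p.1 = p.2 then f p.1 * f p.2 else 0)) := by
        refine tsum_congr fun p => ?_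
        rcases lt_trichotomy p.1 p.2 with h | h | h
        · simp [h, h.ne, h.not_gt]
        · simp [h]
        · simp [h, h.ne', h.not_gt]
    _ = 2 * ∑' p : ι × ι, (if p.1 < p.2 then f p.1 * f p.2 else 0) + ∑' i, f i ^ 2 := by
        rw [Summable.tsum_add ((hpiece _).add (hpiece _)) (hpiece _),
          Summable.tsum_add (hpiece _) (hpiece _), tsum_ite_gt_mul_eq_tsum_ite_lt_mul,
          tsum_ite_eq_mul_eq_tsum_sq]
        ring

end SquareOfSeries

theorem zeta_two_two_eq_pi_pow_four_div_120 :
    (∑' p : ℕ × ℕ,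
        if 0 < p.1 ∧ p.1 < p.2 then (1 : ℝ) / ((p.1 : ℝ) ^ 2 * (p.2 : ℝ) ^ 2) else 0) =
      π ^ 4 / 120 := by
  have hsq := tsum_sq_eq_two_mul_tsum_ite_lt_mul_add_tsum_sq
    (f := fun n : ℕ => (1 : ℝ) / (n : ℝ) ^ 2) (by simp)
  have hdouble : (∑' p : ℕ × ℕ,
        if 0 < p.1 ∧ p.1 < p.2 then (1 : ℝ) / ((p.1 : ℝ) ^ 2 * (p.2 : ℝ) ^ 2) else 0) =
      ∑' p : ℕ × ℕ, if p.1 < p.2 then 1 / (p.1 : ℝ) ^ 2 * (1 / (p.2 : ℝ) ^ 2) else 0 := by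
    refine tsum_congr fun p => ?_
    -- `1 / 0 = 0` in Lean, so the terms with `p.1 = 0` vanish without the condition `0 < p.1`
    rcases Nat.eq_zero_or_pos p.1 with h0 | hpos
    · simp [h0]
    · simp [hpos, mul_comm]
  have hquartic : ∑' n : ℕ, (1 / (n : ℝ) ^ 2) ^ 2 = π ^ 4 / 90 := by
    simpa [div_pow, ← pow_mul] using hasSum_zeta_four.tsum_eq
  rw [hasSum_zeta_two.tsum_eq, hquartic] at hsq
  rw [hdouble]
  linarith

/-- The multiple zeta value identity `4ζ(2,2) = 3ζ(4)`. -/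
theorem four_zeta22_eq_three_zeta4 :
    4 * (∑' p : ℕ × ℕ,
        if 0 < p.1 ∧ p.1 < p.2 then (1 : ℝ) / ((p.1 : ℝ) ^ 2 * (p.2 : ℝ) ^ 2) else 0) =
      3 * ∑' n : ℕ, (1 : ℝ) / ((n : ℝ) + 1) ^ 4 := by
  have hz4 : ∑' n : ℕ, (1 : ℝ) / ((n : ℝ) + 1) ^ 4 = π ^ 4 / 90 := by
    rw [← hasSum_zeta_four.tsum_eq, hasSum_zeta_four.summable.tsum_eq_zero_add]
    simp
  rw [zeta_two_two_eq_pi_pow_four_div_120, hz4]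
  ring
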